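/- arXiv:math/0507512 — 3 statements merged into one kernel-verified Lean document; each statement's English description precedes it below -/
import Mathlib

section
/- Let V be a vector space over a field F, let A₁,…,A_k, B₁,…,B_k be linear endomorphisms of V, and let v₁,…,v_k ∈ V. Suppose (1) A_i B_i A_i = A_i for all i; (2) the A_i commute pairwise; (3) A_i(v_j) = A_j(v_i) for all i, j; (4) A_i B_i (v_i) = v_i for all i; (5) A_i B_j = B_j A_i whenever i ≠ j. Then there exists v ∈ V such that A_i(v) = v_i for all i = 1,…,k. -/
/-!
Induct on the number of equations. If `w` solves all but the equation `a x = v`, where `b` is an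
inner inverse of `a` (`a * b * a = a`) with `a (b v) = v`, then `w + b (v - a w)` solves that one
too, and the correction term lies in `b (ker c)` for every other `c = A i`, because
`c (v - a w) = a (c w) - a (c w) = 0` and `c` commutes with `a` and `b`.
-/

namespace Module.End

variable {R M : Type*} [Ring R] [AddCommGroup M] [Module R M]

theorem apply_add_apply_sub_eq_of_mul_mul_self {a b : Module.End R M} (hab : a * b * a = a)
    {v : M} (hv : a (b v) = v) (w : M) : a (w + b (v - a w)) = v := by
  have hw : a (b (a w)) = a w := LinearMap.congr_fun hab w
  rw [map_add, map_sub, map_sub, hv, hw, add_sub_cancel]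

theorem apply_add_apply_sub_eq_of_commute {a b c : Module.End R M} (hca : Commute c a)
    (hcb : Commute c b) {v w : M} (hv : c v = a (c w)) : c (w + b (v - a w)) = c w := by
  have hker : c (v - a w) = 0 := by
    rw [map_sub, hv, ← Module.End.mul_apply, ← hca.eq, Module.End.mul_apply, sub_self]
  rw [map_add, ← Module.End.mul_apply c b, hcb.eq, Module.End.mul_apply, hker, map_zero, add_zero]

theorem exists_forall_mem_apply_eq {ι : Type*} (A B : ι → Module.End R M) (v : ι → M)
    (h1 : ∀ i, A i * B i * A i = A i)
    (h2 : ∀ i j, Commute (A i) (A j))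
    (h3 : ∀ i j, A i (v j) = A j (v i))
    (h4 : ∀ i, A i (B i (v i)) = v i)
    (h5 : ∀ i j, i ≠ j → Commute (A i) (B j)) (s : Finset ι) :
    ∃ w : M, ∀ i ∈ s, A i w = v i := by
  classical
  induction s using Finset.induction_on with
  | empty => exact ⟨0, by simp⟩
  | @insert j s hj ih =>
    obtain ⟨w, hw⟩ := ih
    refine ⟨w + B j (v j - A j w), (Finset.forall_mem_insert _ _ _).2 ⟨?_, fun i hi => ?_⟩⟩
    · exact apply_add_apply_sub_eq_of_mul_mul_self (h1 j) (h4 j) w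
    · have hij : i ≠ j := fun h => hj (h ▸ hi)
      rw [apply_add_apply_sub_eq_of_commute (h2 i j) (h5 i j hij) (by rw [h3, hw i hi]), hw i hi]

end Module.End

/-- Simultaneous preimage lemma for generalized invertible commuting endomorphisms
(Lemma 2.1.3 of the paper). -/
theorem stmt0 (F V : Type*) [Field F] [AddCommGroup V] [Module F V]
    (k : ℕ) (A B : Fin k → Module.End F V) (v : Fin k → V)
    (h1 : ∀ i, A i * B i * A i = A i)
    (h2 : ∀ i j, A i * A j = A j * A i)
    (h3 : ∀ i j, A i (v j) = A j (v i))
    (h4 : ∀ i, A i (B i (v i)) = v i)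
    (h5 : ∀ i j, i ≠ j → A i * B j = B j * A i) :
    ∃ w : V, ∀ i, A i w = v i := by
  obtain ⟨w, hw⟩ := Module.End.exists_forall_mem_apply_eq A B v h1 h2 h3 h4 h5 Finset.univ
  exact ⟨w, fun i => hw i (Finset.mem_univ i)⟩
end

section
/- Let V be a vector space over a field F and let A₁,…,A_k ∈ End_F(V) be pairwise commuting idempotent endomorphisms (A_i² = A_i). If v₁,…,v_k ∈ V satisfy A_i(v_j) = A_j(v_i) for all i,j and A_i(v_i) = v_i for each i, then there exists v ∈ V with A_i(v) = v_i for all i. -/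
/-! Induct on the number of endomorphisms. If `w` solves the first equations and `P` is the next
idempotent, with target `u`, then `w + u - P w` still solves them (because `A i u = P (v i) = P (A i w)`
and `P` commutes with `A i`) and now also `P (w + u - P w) = u`. -/

namespace Module.End

variable {R M ι : Type*} [Semiring R] [AddCommGroup M] [Module R M]

theorem apply_add_sub_self_apply_of_isIdempotentElem {P : Module.End R M} (hP : IsIdempotentElem P)
    {u : M} (hu : P u = u) (w : M) : P (w + u - P w) = u := by
  have hPP : P (P w) = P w := congrArg (· w) hP.eq
  rw [map_sub, map_add, hu, hPP, add_sub_cancel_left]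

theorem apply_add_sub_apply_of_commute {A P : Module.End R M} (hAP : Commute A P) {u v w : M}
    (hw : A w = v) (hu : A u = P v) : A (w + u - P w) = v := by
  have hAPw : A (P w) = P v := by rw [← hw]; exact congrArg (· w) hAP.eq
  rw [map_sub, map_add, hw, hu, hAPw, add_sub_cancel_right]

theorem exists_forall_mem_apply_eq_of_isIdempotentElem (A : ι → Module.End R M) (v : ι → M)
    (hidem : ∀ i, IsIdempotentElem (A i)) (hcomm : ∀ i j, Commute (A i) (A j))
    (hsym : ∀ i j, A i (v j) = A j (v i)) (hfix : ∀ i, A i (v i) = v i) (s : Finset ι) :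
    ∃ w : M, ∀ i ∈ s, A i w = v i := by
  classical
  induction s using Finset.induction_on with
  | empty => exact ⟨0, by simp⟩
  | insert j s _ ih =>
    obtain ⟨w, hw⟩ := ih
    refine ⟨w + v j - A j w, Finset.forall_mem_insert _ _ _ |>.mpr ⟨?_, fun i hi => ?_⟩⟩
    · exact apply_add_sub_self_apply_of_isIdempotentElem (hidem j) (hfix j) w
    · exact apply_add_sub_apply_of_commute (hcomm i j) (hw i hi) (hsym i j)

end Module.End

/-- Simultaneous preimage lemma for pairwise commuting idempotent endomorphisms
(special case of Lemma 2.1.3 with `B i = id`). -/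
theorem stmt1 (F V : Type*) [Field F] [AddCommGroup V] [Module F V]
    (k : ℕ) (A : Fin k → Module.End F V) (v : Fin k → V)
    (hidem : ∀ i, A i * A i = A i)
    (hcomm : ∀ i j, A i * A j = A j * A i)
    (hsym : ∀ i j, A i (v j) = A j (v i))
    (hfix : ∀ i, A i (v i) = v i) :
    ∃ w : V, ∀ i, A i w = v i := by
  obtain ⟨w, hw⟩ :=
    Module.End.exists_forall_mem_apply_eq_of_isIdempotentElem A v hidem hcomm hsym hfix Finset.univ
  exact ⟨w, fun i => hw i (Finset.mem_univ i)⟩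
end

section
/- Let Λ(n) be the exterior algebra over a field F with the operators Γ_k (k = 1,…,n) defined by Γ_k(x^u) = δ_{k∈u} x^u on monomials. Given distinct indices q₁,…,q_r ∈ {1,…,n} and elements f₁,…,f_r ∈ Λ(n) satisfying Γ_{q_i}(f_j) = Γ_{q_j}(f_i) for all i,j and Γ_{q_i}(f_i) = f_i for all i, there exists f ∈ Λ(n) such that Γ_{q_i}(f) = f_i for all i. -/
namespace Module.Basis

variable {ι R M : Type*} [Semiring R] [AddCommMonoid M] [Module R M]

theorem isIdempotentElem_of_apply_eq_ite (b : Basis ι R M) {P : Module.End R M}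
    (p : ι → Prop) [DecidablePred p] (hP : ∀ u, P (b u) = if p u then b u else 0) :
    IsIdempotentElem P :=
  b.ext fun u => by by_cases hu : p u <;> simp [hP, hu]

theorem commute_of_apply_eq_ite (b : Basis ι R M) {P Q : Module.End R M}
    (p q : ι → Prop) [DecidablePred p] [DecidablePred q]
    (hP : ∀ u, P (b u) = if p u then b u else 0)
    (hQ : ∀ u, Q (b u) = if q u then b u else 0) :
    Commute P Q :=
  b.ext fun u => by by_cases hpu : p u <;> by_cases hqu : q u <;> simp [hP, hQ, hpu, hqu]

end Module.Basis

/-- Induction on `s`: if `g` solves the system on `s`, then `f a + (1 - P a) g` solves it on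
`insert a s`, because `P i (f a) = P a (f i) = P a (P i g)`. -/
theorem Module.End.exists_forall_mem_apply_eq_of_commute {ι R M : Type*} [Semiring R]
    [AddCommGroup M] [Module R M] (P : ι → Module.End R M) (hP : ∀ i, IsIdempotentElem (P i))
    (hcomm : ∀ i j, Commute (P i) (P j)) (f : ι → M)
    (hsym : ∀ i j, P i (f j) = P j (f i)) (hfix : ∀ i, P i (f i) = f i) (s : Finset ι) :
    ∃ g : M, ∀ i ∈ s, P i g = f i := by
  classical
  induction s using Finset.induction_on with
  | empty => exact ⟨0, by simp⟩
  | insert a s _ ih =>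
    obtain ⟨g, hg⟩ := ih
    refine ⟨f a + (1 - P a) g, (Finset.forall_mem_insert _ _ _).2 ⟨?_, fun i hi => ?_⟩⟩
    · have hPa : P a * (1 - P a) = 0 := by rw [mul_sub, mul_one, (hP a).eq, sub_self]
      rw [map_add, hfix, ← Module.End.mul_apply, hPa, LinearMap.zero_apply, add_zero]
    · rw [map_add, hsym, ← Module.End.mul_apply, ← ((Commute.one_left _).sub_left (hcomm a i)).eq,
        Module.End.mul_apply, hg i hi, LinearMap.sub_apply, Module.End.one_apply]
      abel

theorem stmt3_general (F V : Type*) [Field F] [AddCommGroup V] [Module F V]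
    (n : ℕ) (b : Module.Basis (Finset (Fin n)) F V)
    (Γ : Fin n → Module.End F V)
    (hΓ : ∀ (k : Fin n) (u : Finset (Fin n)), Γ k (b u) = if k ∈ u then b u else 0)
    (r : ℕ) (q : Fin r → Fin n)
    (f : Fin r → V)
    (hsym : ∀ i j, Γ (q i) (f j) = Γ (q j) (f i))
    (hfix : ∀ i, Γ (q i) (f i) = f i) :
    ∃ g : V, ∀ i, Γ (q i) g = f i := by
  obtain ⟨g, hg⟩ := Module.End.exists_forall_mem_apply_eq_of_commute (fun i => Γ (q i))
    (fun i => b.isIdempotentElem_of_apply_eq_ite _ (hΓ (q i)))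
    (fun i j => b.commute_of_apply_eq_ite _ _ (hΓ (q i)) (hΓ (q j))) f hsym hfix Finset.univ
  exact ⟨g, fun i => hg i (Finset.mem_univ i)⟩

/-- Simultaneous preimage result for the operators Γ_k = x_k ∂/∂x_k on the
exterior algebra Λ(n) (Corollary 2.1.5 of the paper): given distinct indices
q₁,…,q_r and f₁,…,f_r with Γ_{q_i}(f_j) = Γ_{q_j}(f_i) and Γ_{q_i}(f_i) = f_i,
there is f with Γ_{q_i}(f) = f_i for all i. -/
theorem stmt3 (F V : Type*) [Field F] [AddCommGroup V] [Module F V]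
    (n : ℕ) (b : Module.Basis (Finset (Fin n)) F V)
    (Γ : Fin n → Module.End F V)
    (hΓ : ∀ (k : Fin n) (u : Finset (Fin n)), Γ k (b u) = if k ∈ u then b u else 0)
    (r : ℕ) (q : Fin r → Fin n) (hq : Function.Injective q)
    (f : Fin r → V)
    (hsym : ∀ i j, Γ (q i) (f j) = Γ (q j) (f i))
    (hfix : ∀ i, Γ (q i) (f i) = f i) :
    ∃ g : V, ∀ i, Γ (q i) g = f i :=
  stmt3_general F V n b Γ hΓ r q f hsym hfix
end
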